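/- arXiv:2210.15396 — 5 statements merged into one kernel-verified Lean document; each statement's English description precedes it below -/
import Mathlib

section
/- Let B : ℕ → ℝ be nonnegative, let E ≥ 0, and let g : ℕ → ℕ → ℝ be a nonnegative doubly-indexed sequence such that g ℓ 0 ≤ 1 for all ℓ, and such that for all i ∈ ℕ and all k ≥ 1: g i k ≤ (∑_{ℓ=0}^{i−1} B ℓ · g ℓ (k−1)) + E. Set A_i = ∑_{ℓ=0}^{i−1} B ℓ. Then for all i and all k ≥ 1: g i k ≤ A_i^k / k! + E · ∑_{t=0}^{k−1} A_i^t / t!, and in particular g i k ≤ A_i^k / k! + E · exp(A_i). -/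
lemma aux_pow (k : ℕ) : ∀ a b : ℝ, 0 ≤ b → b ≤ a →
    ((k : ℝ) + 1) * b ^ k * (a - b) ≤ a ^ (k + 1) - b ^ (k + 1) := by
  induction k with
  | zero => intro a b hb hab; simp
  | succ k ih =>
    intro a b hb hab
    have h := ih a b hb hab
    have ha : 0 ≤ a := hb.trans hab
    have hbk : 0 ≤ b ^ k := pow_nonneg hb k
    have hbk1 : b ^ (k + 1) ≤ a * b ^ k := by
      rw [pow_succ']
      exact mul_le_mul_of_nonneg_right hab hbk
    push_cast
    have hab' : (0:ℝ) ≤ a - b := sub_nonneg.2 hab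
    have e2 : a * (((k:ℝ) + 1) * b ^ k * (a - b)) ≤ a * (a ^ (k + 1) - b ^ (k + 1)) :=
      mul_le_mul_of_nonneg_left h ha
    have e3 : ((k:ℝ) + 1) * (a - b) * b ^ (k + 1) ≤ ((k:ℝ) + 1) * (a - b) * (a * b ^ k) :=
      mul_le_mul_of_nonneg_left hbk1 (mul_nonneg (by positivity) hab')
    have e1 : a ^ (k + 1 + 1) - b ^ (k + 1 + 1)
        = a * (a ^ (k + 1) - b ^ (k + 1)) + (a - b) * b ^ (k + 1) := by ring
    nlinarith [e1, e2, e3]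

lemma key_sum (B : ℕ → ℝ) (hB : ∀ ℓ, 0 ≤ B ℓ) (i t : ℕ) :
    ∑ ℓ ∈ Finset.range i, B ℓ * (∑ j ∈ Finset.range ℓ, B j) ^ t
      ≤ (∑ ℓ ∈ Finset.range i, B ℓ) ^ (t + 1) / ((t : ℝ) + 1) := by
  set A : ℕ → ℝ := fun n => ∑ j ∈ Finset.range n, B j with hA
  have hA0 : ∀ n, 0 ≤ A n := fun n => Finset.sum_nonneg fun j _ => hB j
  have step : ∀ ℓ, ((t : ℝ) + 1) * (B ℓ * A ℓ ^ t) ≤ A (ℓ + 1) ^ (t + 1) - A ℓ ^ (t + 1) := by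
    intro ℓ
    have hab : A ℓ ≤ A (ℓ + 1) := by
      simp only [hA, Finset.sum_range_succ]
      linarith [hB ℓ]
    have h := aux_pow t (A (ℓ + 1)) (A ℓ) (hA0 ℓ) hab
    have : A (ℓ + 1) - A ℓ = B ℓ := by simp [hA, Finset.sum_range_succ]
    rw [this] at h
    linarith [h]
  have hsum : ((t : ℝ) + 1) * ∑ ℓ ∈ Finset.range i, B ℓ * A ℓ ^ t
      ≤ A i ^ (t + 1) := by
    rw [Finset.mul_sum]
    calc ∑ ℓ ∈ Finset.range i, ((t : ℝ) + 1) * (B ℓ * A ℓ ^ t)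
        ≤ ∑ ℓ ∈ Finset.range i, (A (ℓ + 1) ^ (t + 1) - A ℓ ^ (t + 1)) :=
          Finset.sum_le_sum fun ℓ _ => step ℓ
      _ = A i ^ (t + 1) - A 0 ^ (t + 1) := Finset.sum_range_sub (fun n => A n ^ (t + 1)) i
      _ ≤ A i ^ (t + 1) := by
          simp [hA]
  have ht1 : (0 : ℝ) < (t : ℝ) + 1 := by positivity
  rw [le_div_iff₀ ht1]
  linarith [hsum]

/-- Recursion-expansion lemma: if a nonnegative doubly-indexed sequence `g`
satisfies `g ℓ 0 ≤ 1` and `g i k ≤ (∑_{ℓ<i} B ℓ * g ℓ (k-1)) + E` for `k ≥ 1`,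
then with `A_i = ∑_{ℓ<i} B ℓ` we have
`g i k ≤ A_i^k / k! + E * ∑_{t<k} A_i^t / t!` and in particular
`g i k ≤ A_i^k / k! + E * exp A_i`. -/
theorem stmt_3 (B : ℕ → ℝ) (hB : ∀ ℓ, 0 ≤ B ℓ) (E : ℝ) (hE : 0 ≤ E)
    (g : ℕ → ℕ → ℝ) (hg : ∀ i k, 0 ≤ g i k) (hg0 : ∀ ℓ, g ℓ 0 ≤ 1)
    (hrec : ∀ i k, 1 ≤ k →
      g i k ≤ (∑ ℓ ∈ Finset.range i, B ℓ * g ℓ (k - 1)) + E) :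
    ∀ i k, 1 ≤ k →
      g i k ≤ (∑ ℓ ∈ Finset.range i, B ℓ) ^ k / (Nat.factorial k : ℝ)
          + E * ∑ t ∈ Finset.range k,
              (∑ ℓ ∈ Finset.range i, B ℓ) ^ t / (Nat.factorial t : ℝ)
      ∧ g i k ≤ (∑ ℓ ∈ Finset.range i, B ℓ) ^ k / (Nat.factorial k : ℝ)
          + E * Real.exp (∑ ℓ ∈ Finset.range i, B ℓ) := by
  set A : ℕ → ℝ := fun n => ∑ j ∈ Finset.range n, B j with hA
  have hA0 : ∀ n, 0 ≤ A n := fun n => Finset.sum_nonneg fun j _ => hB j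
  have main : ∀ k i, g i k ≤ A i ^ k / (Nat.factorial k : ℝ)
      + E * ∑ t ∈ Finset.range k, A i ^ t / (Nat.factorial t : ℝ) := by
    intro k
    induction k with
    | zero => intro i; simpa using hg0 i
    | succ k ih =>
      intro i
      have h1 := hrec i (k + 1) (by omega)
      simp only [Nat.add_sub_cancel] at h1
      have h2 : ∑ ℓ ∈ Finset.range i, B ℓ * g ℓ k
          ≤ ∑ ℓ ∈ Finset.range i,
            (B ℓ * A ℓ ^ k / (Nat.factorial k : ℝ)
              + E * ∑ t ∈ Finset.range k, B ℓ * A ℓ ^ t / (Nat.factorial t : ℝ)) := by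
        apply Finset.sum_le_sum
        intro ℓ _
        have := mul_le_mul_of_nonneg_left (ih ℓ) (hB ℓ)
        calc B ℓ * g ℓ k ≤ B ℓ * (A ℓ ^ k / (Nat.factorial k : ℝ)
              + E * ∑ t ∈ Finset.range k, A ℓ ^ t / (Nat.factorial t : ℝ)) := this
          _ = B ℓ * A ℓ ^ k / (Nat.factorial k : ℝ)
              + E * ∑ t ∈ Finset.range k, B ℓ * A ℓ ^ t / (Nat.factorial t : ℝ) := by
            rw [mul_add, ← mul_div_assoc, Finset.mul_sum, Finset.mul_sum]
            congr 1
            rw [Finset.mul_sum]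
            apply Finset.sum_congr rfl; intros; ring
      have h3 : ∑ ℓ ∈ Finset.range i,
            (B ℓ * A ℓ ^ k / (Nat.factorial k : ℝ)
              + E * ∑ t ∈ Finset.range k, B ℓ * A ℓ ^ t / (Nat.factorial t : ℝ))
          = (∑ ℓ ∈ Finset.range i, B ℓ * A ℓ ^ k) / (Nat.factorial k : ℝ)
            + E * ∑ t ∈ Finset.range k,
                (∑ ℓ ∈ Finset.range i, B ℓ * A ℓ ^ t) / (Nat.factorial t : ℝ) := by
        rw [Finset.sum_add_distrib, Finset.sum_div, ← Finset.mul_sum, Finset.sum_comm]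
        congr 2
        apply Finset.sum_congr rfl; intros t _
        rw [Finset.sum_div]
      have hfac : ∀ t : ℕ, (0 : ℝ) < (Nat.factorial t : ℝ) := fun t => by
        exact_mod_cast t.factorial_pos
      have h4 : (∑ ℓ ∈ Finset.range i, B ℓ * A ℓ ^ k) / (Nat.factorial k : ℝ)
          ≤ A i ^ (k + 1) / (Nat.factorial (k + 1) : ℝ) := by
        have := key_sum B hB i k
        have hkf : (Nat.factorial (k + 1) : ℝ) = ((k : ℝ) + 1) * (Nat.factorial k : ℝ) := by
          rw [Nat.factorial_succ]; push_cast; ring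
        rw [hkf, div_le_div_iff₀ (hfac k) (by positivity)]
        have h5 : (∑ ℓ ∈ Finset.range i, B ℓ * A ℓ ^ k) * ((k : ℝ) + 1) ≤ A i ^ (k + 1) := by
          have ht1 : (0 : ℝ) < (k : ℝ) + 1 := by positivity
          calc (∑ ℓ ∈ Finset.range i, B ℓ * A ℓ ^ k) * ((k : ℝ) + 1)
              ≤ A i ^ (k + 1) / ((k : ℝ) + 1) * ((k : ℝ) + 1) := by
                exact mul_le_mul_of_nonneg_right this (le_of_lt ht1)
            _ = A i ^ (k + 1) := by field_simp
        calc (∑ ℓ ∈ Finset.range i, B ℓ * A ℓ ^ k) * (((k : ℝ) + 1) * (Nat.factorial k : ℝ))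
            = (∑ ℓ ∈ Finset.range i, B ℓ * A ℓ ^ k) * ((k : ℝ) + 1) * (Nat.factorial k : ℝ) := by
              ring
          _ ≤ A i ^ (k + 1) * (Nat.factorial k : ℝ) :=
              mul_le_mul_of_nonneg_right h5 (le_of_lt (hfac k))
      have h6 : ∀ t ∈ Finset.range k,
          (∑ ℓ ∈ Finset.range i, B ℓ * A ℓ ^ t) / (Nat.factorial t : ℝ)
            ≤ A i ^ (t + 1) / (Nat.factorial (t + 1) : ℝ) := by
        intro t _
        have := key_sum B hB i t
        have hkf : (Nat.factorial (t + 1) : ℝ) = ((t : ℝ) + 1) * (Nat.factorial t : ℝ) := by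
          rw [Nat.factorial_succ]; push_cast; ring
        rw [hkf]
        rw [div_le_div_iff₀ (hfac t) (by positivity)]
        have ht1 : (0 : ℝ) < (t : ℝ) + 1 := by positivity
        have h5 : (∑ ℓ ∈ Finset.range i, B ℓ * A ℓ ^ t) * ((t : ℝ) + 1) ≤ A i ^ (t + 1) := by
          calc (∑ ℓ ∈ Finset.range i, B ℓ * A ℓ ^ t) * ((t : ℝ) + 1)
              ≤ A i ^ (t + 1) / ((t : ℝ) + 1) * ((t : ℝ) + 1) :=
                mul_le_mul_of_nonneg_right this (le_of_lt ht1)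
            _ = A i ^ (t + 1) := by field_simp
        calc (∑ ℓ ∈ Finset.range i, B ℓ * A ℓ ^ t) * (((t : ℝ) + 1) * (Nat.factorial t : ℝ))
            = (∑ ℓ ∈ Finset.range i, B ℓ * A ℓ ^ t) * ((t : ℝ) + 1) * (Nat.factorial t : ℝ) := by ring
          _ ≤ A i ^ (t + 1) * (Nat.factorial t : ℝ) :=
              mul_le_mul_of_nonneg_right h5 (le_of_lt (hfac t))
      have h7 : ∑ t ∈ Finset.range k,
            (∑ ℓ ∈ Finset.range i, B ℓ * A ℓ ^ t) / (Nat.factorial t : ℝ)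
          ≤ ∑ t ∈ Finset.range k, A i ^ (t + 1) / (Nat.factorial (t + 1) : ℝ) :=
        Finset.sum_le_sum h6
      have h8 : (∑ t ∈ Finset.range k, A i ^ (t + 1) / (Nat.factorial (t + 1) : ℝ)) + 1
          = ∑ t ∈ Finset.range (k + 1), A i ^ t / (Nat.factorial t : ℝ) := by
        rw [Finset.sum_range_succ']
        simp
      calc g i (k + 1) ≤ (∑ ℓ ∈ Finset.range i, B ℓ * g ℓ k) + E := h1
        _ ≤ (∑ ℓ ∈ Finset.range i, B ℓ * A ℓ ^ k) / (Nat.factorial k : ℝ)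
            + E * (∑ t ∈ Finset.range k,
                (∑ ℓ ∈ Finset.range i, B ℓ * A ℓ ^ t) / (Nat.factorial t : ℝ)) + E := by
          rw [← h3]; linarith [h2]
        _ ≤ A i ^ (k + 1) / (Nat.factorial (k + 1) : ℝ)
            + E * (∑ t ∈ Finset.range k, A i ^ (t + 1) / (Nat.factorial (t + 1) : ℝ)) + E := by
          have := mul_le_mul_of_nonneg_left h7 hE
          linarith [h4]
        _ = A i ^ (k + 1) / (Nat.factorial (k + 1) : ℝ)
            + E * ((∑ t ∈ Finset.range k, A i ^ (t + 1) / (Nat.factorial (t + 1) : ℝ)) + 1) := by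
          ring
        _ = A i ^ (k + 1) / (Nat.factorial (k + 1) : ℝ)
            + E * ∑ t ∈ Finset.range (k + 1), A i ^ t / (Nat.factorial t : ℝ) := by
          rw [h8]
  intro i k hk
  refine ⟨main k i, ?_⟩
  have hexp : ∑ t ∈ Finset.range k, A i ^ t / (Nat.factorial t : ℝ) ≤ Real.exp (A i) :=
    Real.sum_le_exp_of_nonneg (hA0 i) k
  have := mul_le_mul_of_nonneg_left hexp hE
  linarith [main k i]
end

section
/- Let c ≥ 0 be a real number and let f : ℕ → ℕ → ℝ be a nonnegative doubly-indexed sequence with f 0 ℓ = 0 for all ℓ ≥ 1, f i 0 ≤ 1 for all i, and f i ℓ ≤ f (i−1) ℓ + c · f (i−1) (ℓ−1) for all i ≥ 1 and ℓ ≥ 1. Then for all i and all ℓ ≥ 1: f i ℓ ≤ (i choose ℓ) · c^ℓ ≤ i^ℓ · c^ℓ / ℓ! ≤ (e · i · c / ℓ)^ℓ. -/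
/-- Two-index recursion bound: if `f` is nonnegative with `f 0 ℓ = 0` for `ℓ ≥ 1`,
`f i 0 ≤ 1`, and `f i ℓ ≤ f (i-1) ℓ + c * f (i-1) (ℓ-1)` for `i, ℓ ≥ 1`, then
`f i ℓ ≤ (i choose ℓ) * c^ℓ ≤ i^ℓ * c^ℓ / ℓ! ≤ (e·i·c/ℓ)^ℓ`. -/
theorem stmt_4 (c : ℝ) (hc : 0 ≤ c) (f : ℕ → ℕ → ℝ) (hf : ∀ i ℓ, 0 ≤ f i ℓ)
    (hf0 : ∀ ℓ, 1 ≤ ℓ → f 0 ℓ = 0) (hfi0 : ∀ i, f i 0 ≤ 1)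
    (hrec : ∀ i ℓ, 1 ≤ i → 1 ≤ ℓ → f i ℓ ≤ f (i - 1) ℓ + c * f (i - 1) (ℓ - 1)) :
    ∀ i ℓ, 1 ≤ ℓ →
      f i ℓ ≤ (Nat.choose i ℓ : ℝ) * c ^ ℓ
      ∧ (Nat.choose i ℓ : ℝ) * c ^ ℓ ≤ (i : ℝ) ^ ℓ * c ^ ℓ / (Nat.factorial ℓ : ℝ)
      ∧ (i : ℝ) ^ ℓ * c ^ ℓ / (Nat.factorial ℓ : ℝ)
          ≤ (Real.exp 1 * i * c / ℓ) ^ ℓ := by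
  have key : ∀ i ℓ, f i ℓ ≤ (Nat.choose i ℓ : ℝ) * c ^ ℓ := by
    intro i
    induction i with
    | zero =>
      intro ℓ
      rcases Nat.eq_zero_or_pos ℓ with h | h
      · subst h; simpa using hfi0 0
      · rw [hf0 ℓ h]
        positivity
    | succ n ih =>
      intro ℓ
      rcases Nat.eq_zero_or_pos ℓ with h | h
      · subst h; simpa using hfi0 (n + 1)
      · obtain ⟨m, rfl⟩ := Nat.exists_eq_add_of_le h
        have := hrec (n + 1) (1 + m) (by omega) (by omega)
        simp only [Nat.add_sub_cancel, Nat.add_sub_cancel_left] at this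
        calc f (n + 1) (1 + m) ≤ f n (1 + m) + c * f n m := by
              simpa using this
          _ ≤ (Nat.choose n (1 + m) : ℝ) * c ^ (1 + m)
              + c * ((Nat.choose n m : ℝ) * c ^ m) := by
              gcongr
              · exact ih (1 + m)
              · exact ih m
          _ = (Nat.choose (n + 1) (1 + m) : ℝ) * c ^ (1 + m) := by
              rw [show n + 1 = n + 1 from rfl, show (1 + m) = m + 1 by omega,
                Nat.choose_succ_succ, Nat.cast_add]
              ring
  intro i ℓ hℓ
  refine ⟨key i ℓ, ?_, ?_⟩
  · have h1 : (Nat.choose i ℓ : ℝ) ≤ (i : ℝ) ^ ℓ / (Nat.factorial ℓ : ℝ) := by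
      have := Nat.choose_le_pow_div (α := ℝ) ℓ i
      simpa using this
    have hcp : (0:ℝ) ≤ c ^ ℓ := by positivity
    calc (Nat.choose i ℓ : ℝ) * c ^ ℓ ≤ ((i : ℝ) ^ ℓ / (Nat.factorial ℓ : ℝ)) * c ^ ℓ := by
          gcongr
      _ = (i : ℝ) ^ ℓ * c ^ ℓ / (Nat.factorial ℓ : ℝ) := by ring
  · have hℓpos : (0:ℝ) < (ℓ : ℝ) := by exact_mod_cast hℓ
    have hfac : (0:ℝ) < (Nat.factorial ℓ : ℝ) := by
      exact_mod_cast Nat.factorial_pos ℓ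
    have hexp : (ℓ : ℝ) ^ ℓ / (Nat.factorial ℓ : ℝ) ≤ Real.exp ℓ :=
      Real.pow_div_factorial_le_exp (ℓ:ℝ) hℓpos.le ℓ
    -- ℓ^ℓ ≤ exp ℓ * ℓ!
    have h2 : (ℓ : ℝ) ^ ℓ ≤ Real.exp (ℓ : ℝ) * (Nat.factorial ℓ : ℝ) := by
      rw [div_le_iff₀ hfac] at hexp; exact hexp
    have hrhs : (Real.exp 1 * i * c / ℓ) ^ ℓ
        = Real.exp (ℓ : ℝ) * ((i:ℝ)^ℓ * c^ℓ) / (ℓ:ℝ)^ℓ := by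
      rw [div_pow, mul_pow, mul_pow, ← Real.exp_nat_mul]
      ring_nf
    rw [hrhs, div_le_div_iff₀ hfac (by positivity)]
    calc (i : ℝ) ^ ℓ * c ^ ℓ * (ℓ:ℝ)^ℓ
        ≤ (i : ℝ) ^ ℓ * c ^ ℓ * (Real.exp (ℓ : ℝ) * (Nat.factorial ℓ : ℝ)) := by
          gcongr
      _ = Real.exp (ℓ : ℝ) * ((i:ℝ)^ℓ * c^ℓ) * (Nat.factorial ℓ : ℝ) := by ring
end

section
/- For a real number N > 0 define μ₃(ℓ) = max(2e·ℓ^{3/2}/√N, 10·N^{1/8}) for ℓ ∈ ℕ, and define A_i = ∑_{ℓ=0}^{i−1} √2·(√(μ₃(ℓ)/N) + ℓ/N). Then there exists an absolute constant C > 0 such that for every real N ≥ 1 and every natural number i ≥ 1: A_i ≤ 2√e · i^{7/4}/N^{3/4} + √2 · i²/N + C · N^{−1/48}. -/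
/-- `μ₃(ℓ) = max(2e·ℓ^{3/2}/√N, 10·N^{1/8})`. -/
noncomputable def mu3 (N : ℝ) (ℓ : ℕ) : ℝ :=
  max (2 * Real.exp 1 * (ℓ : ℝ) ^ ((3 : ℝ) / 2) / Real.sqrt N) (10 * N ^ ((1 : ℝ) / 8))

/-- First claim of Lemma `boundAi`:
`A_i = ∑_{ℓ<i} √2·(√(μ₃(ℓ)/N) + ℓ/N) ≤ 2√e·i^{7/4}/N^{3/4} + √2·i²/N + C·N^{-1/48}`
for an absolute constant `C`. -/
theorem stmt_6 : ∃ C : ℝ, 0 < C ∧ ∀ N : ℝ, 1 ≤ N → ∀ i : ℕ, 1 ≤ i →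
    ∑ ℓ ∈ Finset.range i, Real.sqrt 2 * (Real.sqrt (mu3 N ℓ / N) + (ℓ : ℝ) / N)
      ≤ 2 * Real.sqrt (Real.exp 1) * (i : ℝ) ^ ((7 : ℝ) / 4) / N ^ ((3 : ℝ) / 4)
        + Real.sqrt 2 * (i : ℝ) ^ 2 / N
        + C * N ^ (-(1 : ℝ) / 48) := by
  refine ⟨Real.sqrt 20 * ((5 / Real.exp 1) ^ ((2:ℝ)/3) + 1), by positivity, ?_⟩
  intro N hN i hi
  have hN0 : (0:ℝ) < N := one_pos.trans_le hN
  have he0 : (0:ℝ) < Real.exp 1 := Real.exp_pos 1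
  have hi0 : (0:ℝ) < (i:ℝ) := by exact_mod_cast hi
  set e := Real.exp 1 with he
  set b : ℝ := 10 * N ^ ((1:ℝ)/8) with hbdef
  have hb0 : (0:ℝ) < b := by positivity
  have hmu : ∀ ℓ : ℕ, mu3 N ℓ = max (2 * e * (ℓ:ℝ) ^ ((3:ℝ)/2) / Real.sqrt N) b :=
    fun ℓ => rfl
  -- basic rpow facts
  have hNs : Real.sqrt N * N = N ^ ((3:ℝ)/2) := by
    rw [Real.sqrt_eq_rpow]
    nth_rewrite 2 [← Real.rpow_one N]
    rw [← Real.rpow_add hN0]; norm_num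
  -- pointwise split of the max
  have hpt : ∀ ℓ ∈ Finset.range i,
      Real.sqrt 2 * (Real.sqrt (mu3 N ℓ / N) + (ℓ:ℝ)/N)
        ≤ (Real.sqrt 2 * Real.sqrt ((2 * e * (ℓ:ℝ) ^ ((3:ℝ)/2) / Real.sqrt N) / N)
          + (if 2 * e * (ℓ:ℝ) ^ ((3:ℝ)/2) / Real.sqrt N < b then Real.sqrt 2 * Real.sqrt (b / N) else 0))
          + Real.sqrt 2 * ((ℓ:ℝ)/N) := by
    intro ℓ _
    rw [mul_add]
    refine add_le_add ?_ le_rfl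
    by_cases h : 2 * e * (ℓ:ℝ) ^ ((3:ℝ)/2) / Real.sqrt N < b
    · rw [if_pos h, hmu, max_eq_right h.le]
      have : (0:ℝ) ≤ Real.sqrt 2 * Real.sqrt ((2 * e * (ℓ:ℝ) ^ ((3:ℝ)/2) / Real.sqrt N) / N) := by
        positivity
      linarith
    · rw [if_neg h, hmu, max_eq_left (not_lt.1 h), add_zero]
  refine le_trans (Finset.sum_le_sum hpt) ?_
  rw [Finset.sum_add_distrib, Finset.sum_add_distrib]
  -- Term 1
  have hT1 : ∑ ℓ ∈ Finset.range i,
      Real.sqrt 2 * Real.sqrt ((2 * e * (ℓ:ℝ) ^ ((3:ℝ)/2) / Real.sqrt N) / N)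
      ≤ 2 * Real.sqrt e * (i:ℝ) ^ ((7:ℝ)/4) / N ^ ((3:ℝ)/4) := by
    have hpt1 : ∀ ℓ ∈ Finset.range i,
        Real.sqrt 2 * Real.sqrt ((2 * e * (ℓ:ℝ) ^ ((3:ℝ)/2) / Real.sqrt N) / N)
          ≤ 2 * Real.sqrt e * (i:ℝ) ^ ((3:ℝ)/4) / N ^ ((3:ℝ)/4) := by
      intro ℓ hℓ
      have hℓi : (ℓ:ℝ) ≤ (i:ℝ) := by
        exact_mod_cast (Finset.mem_range.1 hℓ).le
      rw [← Real.sqrt_mul (by norm_num : (0:ℝ) ≤ 2)]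
      have hy : (0:ℝ) ≤ 2 * Real.sqrt e * (i:ℝ) ^ ((3:ℝ)/4) / N ^ ((3:ℝ)/4) := by positivity
      have hsq : (2 * Real.sqrt e * (i:ℝ) ^ ((3:ℝ)/4) / N ^ ((3:ℝ)/4)) ^ 2
          = 4 * e * (i:ℝ) ^ ((3:ℝ)/2) / N ^ ((3:ℝ)/2) := by
        rw [div_pow, mul_pow, mul_pow, Real.sq_sqrt he0.le,
          ← Real.rpow_natCast ((i:ℝ) ^ ((3:ℝ)/4)) 2, ← Real.rpow_natCast (N ^ ((3:ℝ)/4)) 2,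
          ← Real.rpow_mul (Nat.cast_nonneg i), ← Real.rpow_mul hN0.le]
        norm_num
      have hle : 2 * (2 * e * (ℓ:ℝ) ^ ((3:ℝ)/2) / Real.sqrt N / N)
          ≤ (2 * Real.sqrt e * (i:ℝ) ^ ((3:ℝ)/4) / N ^ ((3:ℝ)/4)) ^ 2 := by
        rw [hsq, div_div, hNs]
        have hll : (ℓ:ℝ) ^ ((3:ℝ)/2) ≤ (i:ℝ) ^ ((3:ℝ)/2) :=
          Real.rpow_le_rpow (Nat.cast_nonneg ℓ) hℓi (by norm_num)
        calc 2 * (2 * e * (ℓ:ℝ) ^ ((3:ℝ)/2) / N ^ ((3:ℝ)/2))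
            = 4 * e * (ℓ:ℝ) ^ ((3:ℝ)/2) / N ^ ((3:ℝ)/2) := by ring
          _ ≤ 4 * e * (i:ℝ) ^ ((3:ℝ)/2) / N ^ ((3:ℝ)/2) := by gcongr
      calc Real.sqrt (2 * (2 * e * (ℓ:ℝ) ^ ((3:ℝ)/2) / Real.sqrt N / N))
          ≤ Real.sqrt ((2 * Real.sqrt e * (i:ℝ) ^ ((3:ℝ)/4) / N ^ ((3:ℝ)/4)) ^ 2) :=
            Real.sqrt_le_sqrt hle
        _ = 2 * Real.sqrt e * (i:ℝ) ^ ((3:ℝ)/4) / N ^ ((3:ℝ)/4) := Real.sqrt_sq hy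
    refine le_trans (Finset.sum_le_card_nsmul _ _ _ hpt1) ?_
    rw [Finset.card_range, nsmul_eq_mul,
      show (7:ℝ)/4 = 1 + 3/4 by norm_num, Real.rpow_add hi0, Real.rpow_one]
    ring_nf
    exact le_rfl
  -- Term 2
  have hT2 : ∑ ℓ ∈ Finset.range i,
      (if 2 * e * (ℓ:ℝ) ^ ((3:ℝ)/2) / Real.sqrt N < b then Real.sqrt 2 * Real.sqrt (b / N) else 0)
      ≤ Real.sqrt 20 * ((5 / e) ^ ((2:ℝ)/3) + 1) * N ^ (-(1:ℝ)/48) := by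
    set L : ℝ := (5 / e) ^ ((2:ℝ)/3) * N ^ ((5:ℝ)/12) with hLdef
    have hL0 : (0:ℝ) ≤ L := by positivity
    rw [← Finset.sum_filter, Finset.sum_const, nsmul_eq_mul]
    have hcard : ((Finset.filter
        (fun ℓ : ℕ => 2 * e * (ℓ:ℝ) ^ ((3:ℝ)/2) / Real.sqrt N < b) (Finset.range i)).card : ℝ)
        ≤ L + 1 := by
      have hsub : Finset.filter
          (fun ℓ : ℕ => 2 * e * (ℓ:ℝ) ^ ((3:ℝ)/2) / Real.sqrt N < b) (Finset.range i)
          ⊆ Finset.range (⌊L⌋₊ + 1) := by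
        intro ℓ hℓ
        obtain ⟨-, hcond⟩ := Finset.mem_filter.1 hℓ
        have h1 : (ℓ:ℝ) ^ ((3:ℝ)/2) < (5 / e) * N ^ ((5:ℝ)/8) := by
          rw [div_lt_iff₀ (Real.sqrt_pos.2 hN0)] at hcond
          rw [hbdef, Real.sqrt_eq_rpow] at hcond
          have hN58 : N ^ ((1:ℝ)/8) * N ^ ((1:ℝ)/2) = N ^ ((5:ℝ)/8) := by
            rw [← Real.rpow_add hN0]; norm_num
          rw [div_mul_eq_mul_div, lt_div_iff₀ he0]
          nlinarith [hN58]
        have h2 : (ℓ:ℝ) < L := by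
          have h3 : ((ℓ:ℝ) ^ ((3:ℝ)/2)) ^ ((2:ℝ)/3)
              < ((5 / e) * N ^ ((5:ℝ)/8)) ^ ((2:ℝ)/3) :=
            Real.rpow_lt_rpow (by positivity) h1 (by norm_num)
          rw [← Real.rpow_mul (Nat.cast_nonneg ℓ),
            Real.mul_rpow (by positivity) (by positivity),
            ← Real.rpow_mul hN0.le] at h3
          norm_num at h3
          rw [hLdef]
          convert h3 using 3 <;> norm_num
        rw [Finset.mem_range, Nat.lt_succ_iff]
        exact Nat.le_floor h2.le
      have hcc := Finset.card_le_card hsub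
      rw [Finset.card_range] at hcc
      calc ((Finset.filter
          (fun ℓ : ℕ => 2 * e * (ℓ:ℝ) ^ ((3:ℝ)/2) / Real.sqrt N < b) (Finset.range i)).card : ℝ)
          ≤ ((⌊L⌋₊ + 1 : ℕ) : ℝ) := by exact_mod_cast hcc
        _ ≤ L + 1 := by push_cast; linarith [Nat.floor_le hL0]
    have hc : Real.sqrt 2 * Real.sqrt (b / N) = Real.sqrt 20 * N ^ (-(7:ℝ)/16) := by
      have hbN : b / N = 10 * N ^ (-(7:ℝ)/8) := by
        rw [hbdef, mul_div_assoc,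
          show (-(7:ℝ)/8) = 1/8 - 1 by norm_num, Real.rpow_sub hN0, Real.rpow_one]
      rw [hbN, Real.sqrt_mul (by norm_num : (0:ℝ) ≤ 10),
        Real.sqrt_eq_rpow (N ^ (-(7:ℝ)/8)), ← Real.rpow_mul hN0.le,
        ← mul_assoc, ← Real.sqrt_mul (by norm_num : (0:ℝ) ≤ 2)]
      norm_num
    rw [hc]
    have hstep : ((Finset.filter
        (fun ℓ : ℕ => 2 * e * (ℓ:ℝ) ^ ((3:ℝ)/2) / Real.sqrt N < b) (Finset.range i)).card : ℝ)
        * (Real.sqrt 20 * N ^ (-(7:ℝ)/16))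
        ≤ (L + 1) * (Real.sqrt 20 * N ^ (-(7:ℝ)/16)) :=
      mul_le_mul_of_nonneg_right hcard (by positivity)
    refine le_trans hstep ?_
    have hN1 : N ^ ((5:ℝ)/12) * N ^ (-(7:ℝ)/16) = N ^ (-(1:ℝ)/48) := by
      rw [← Real.rpow_add hN0]; norm_num
    have hN2 : N ^ (-(7:ℝ)/16) ≤ N ^ (-(1:ℝ)/48) :=
      Real.rpow_le_rpow_of_exponent_le hN (by norm_num)
    have key1 : L * N ^ (-(7:ℝ)/16) = (5 / e) ^ ((2:ℝ)/3) * N ^ (-(1:ℝ)/48) := by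
      rw [hLdef, mul_assoc, hN1]
    have key2 : Real.sqrt 20 * N ^ (-(7:ℝ)/16) ≤ Real.sqrt 20 * N ^ (-(1:ℝ)/48) :=
      mul_le_mul_of_nonneg_left hN2 (Real.sqrt_nonneg 20)
    nlinarith [Real.sqrt_nonneg 20, key1, key2]
  -- Term 3
  have hT3 : ∑ ℓ ∈ Finset.range i, Real.sqrt 2 * ((ℓ:ℝ)/N)
      ≤ Real.sqrt 2 * (i:ℝ) ^ 2 / N := by
    have hpt3 : ∀ ℓ ∈ Finset.range i,
        Real.sqrt 2 * ((ℓ:ℝ)/N) ≤ Real.sqrt 2 * ((i:ℝ)/N) := by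
      intro ℓ hℓ
      have : (ℓ:ℝ) ≤ (i:ℝ) := by exact_mod_cast (Finset.mem_range.1 hℓ).le
      gcongr
    refine le_trans (Finset.sum_le_card_nsmul _ _ _ hpt3) ?_
    rw [Finset.card_range, nsmul_eq_mul]
    apply le_of_eq
    ring
  linarith [hT1, hT2, hT3]
end

section
/- For a real number N > 0 define μ₃(ℓ) = max(2e·ℓ^{3/2}/√N, 10·N^{1/8}) for ℓ ∈ ℕ, and define A_i = ∑_{ℓ=0}^{i−1} √2·(√(μ₃(ℓ)/N) + ℓ/N). Then there exists N₀ such that for every real N ≥ N₀ and every natural number i with i ≤ N^{1/2}, one has A_i < 2e·N^{1/8}. -/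
/-- Second claim of Lemma `boundAi`: for `N` large enough and `i ≤ √N`,
`A_i = ∑_{ℓ<i} √2·(√(μ₃(ℓ)/N) + ℓ/N) < 2e·N^{1/8}`. -/
theorem stmt_7 : ∃ N₀ : ℝ, ∀ N : ℝ, N₀ ≤ N → ∀ i : ℕ, (i : ℝ) ≤ N ^ ((1 : ℝ) / 2) →
    ∑ ℓ ∈ Finset.range i, Real.sqrt 2 * (Real.sqrt (mu3 N ℓ / N) + (ℓ : ℝ) / N)
      < 2 * Real.exp 1 * N ^ ((1 : ℝ) / 8) := by
  refine ⟨10 ^ 16, fun N hN i hi => ?_⟩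
  have hN1 : (1 : ℝ) ≤ N := by norm_num at hN; linarith
  have hN0 : (0 : ℝ) < N := by linarith
  have ht : (10 : ℝ) ≤ N ^ ((1 : ℝ) / 8) := by
    have h1 : ((10 : ℝ) ^ (16 : ℕ)) ^ ((1 : ℝ) / 8) ≤ N ^ ((1 : ℝ) / 8) :=
      Real.rpow_le_rpow (by positivity) (by exact_mod_cast hN) (by norm_num)
    have h2 : ((10 : ℝ) ^ (16 : ℕ)) ^ ((1 : ℝ) / 8) = 10 ^ (2 : ℕ) := by
      rw [← Real.rpow_natCast 10 16, ← Real.rpow_mul (by norm_num),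
        ← Real.rpow_natCast 10 2]
      push_cast
      norm_num
    nlinarith [h1]
  have ht0 : (0 : ℝ) < N ^ ((1 : ℝ) / 8) := by linarith
  set B : ℝ := Real.sqrt 2 * (Real.sqrt (2 * Real.exp 1) * N ^ (-(3 : ℝ) / 8)
      + N ^ (-(1 : ℝ) / 2)) with hB
  have key : ∀ ℓ : ℕ, (ℓ : ℝ) ≤ N ^ ((1 : ℝ) / 2) →
      Real.sqrt 2 * (Real.sqrt (mu3 N ℓ / N) + (ℓ : ℝ) / N) ≤ B := by
    intro ℓ hℓ
    have hmu : mu3 N ℓ ≤ 2 * Real.exp 1 * N ^ ((1 : ℝ) / 4) := by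
      apply max_le
      · have h1 : (ℓ : ℝ) ^ ((3 : ℝ) / 2) ≤ (N ^ ((1 : ℝ) / 2)) ^ ((3 : ℝ) / 2) :=
          Real.rpow_le_rpow (Nat.cast_nonneg _) hℓ (by norm_num)
        have h2 : (N ^ ((1 : ℝ) / 2)) ^ ((3 : ℝ) / 2) = N ^ ((3 : ℝ) / 4) := by
          rw [← Real.rpow_mul hN0.le]; norm_num
        have hs : Real.sqrt N = N ^ ((1 : ℝ) / 2) := Real.sqrt_eq_rpow N
        rw [hs]
        calc 2 * Real.exp 1 * (ℓ : ℝ) ^ ((3 : ℝ) / 2) / N ^ ((1 : ℝ) / 2)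
            ≤ 2 * Real.exp 1 * N ^ ((3 : ℝ) / 4) / N ^ ((1 : ℝ) / 2) := by
              have h1' : (ℓ : ℝ) ^ ((3 : ℝ) / 2) ≤ N ^ ((3 : ℝ) / 4) := h2 ▸ h1
              gcongr
          _ = 2 * Real.exp 1 * N ^ ((1 : ℝ) / 4) := by
              rw [mul_div_assoc, ← Real.rpow_sub hN0]; norm_num
      · have h3 : N ^ ((1 : ℝ) / 4) = N ^ ((1 : ℝ) / 8) * N ^ ((1 : ℝ) / 8) := by
          rw [← Real.rpow_add hN0]; norm_num
        nlinarith [Real.exp_one_gt_d9, ht0]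
    have hsqrt : Real.sqrt (mu3 N ℓ / N)
        ≤ Real.sqrt (2 * Real.exp 1) * N ^ (-(3 : ℝ) / 8) := by
      have hd : mu3 N ℓ / N ≤ 2 * Real.exp 1 * N ^ (-(3 : ℝ) / 4) := by
        rw [div_le_iff₀ hN0, mul_assoc, ← Real.rpow_add_one hN0.ne']
        calc mu3 N ℓ ≤ 2 * Real.exp 1 * N ^ ((1 : ℝ) / 4) := hmu
          _ = 2 * Real.exp 1 * N ^ (-(3 : ℝ) / 4 + 1) := by norm_num
      calc Real.sqrt (mu3 N ℓ / N) ≤ Real.sqrt (2 * Real.exp 1 * N ^ (-(3 : ℝ) / 4)) :=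
            Real.sqrt_le_sqrt hd
        _ = Real.sqrt (2 * Real.exp 1) * Real.sqrt (N ^ (-(3 : ℝ) / 4)) :=
            Real.sqrt_mul (by positivity) _
        _ = Real.sqrt (2 * Real.exp 1) * N ^ (-(3 : ℝ) / 8) := by
            congr 1
            rw [show (-(3 : ℝ) / 8) = -(3 : ℝ) / 4 * (1 / 2) by norm_num,
              Real.rpow_mul hN0.le, ← Real.sqrt_eq_rpow]
    have hdiv : (ℓ : ℝ) / N ≤ N ^ (-(1 : ℝ) / 2) := by
      have h4 : N ^ ((1 : ℝ) / 2) / N = N ^ (-(1 : ℝ) / 2) := by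
        rw [div_eq_iff hN0.ne', ← Real.rpow_add_one hN0.ne']; norm_num
      rw [← h4]
      gcongr
    exact mul_le_mul_of_nonneg_left (add_le_add hsqrt hdiv) (Real.sqrt_nonneg 2)
  have hB0 : 0 ≤ B := by positivity
  have e1 : N ^ ((1 : ℝ) / 2) * N ^ (-(3 : ℝ) / 8) = N ^ ((1 : ℝ) / 8) := by
    rw [← Real.rpow_add hN0]; norm_num
  have e2 : N ^ ((1 : ℝ) / 2) * N ^ (-(1 : ℝ) / 2) = 1 := by
    rw [← Real.rpow_add hN0]; norm_num
  have hsum : ∑ ℓ ∈ Finset.range i, Real.sqrt 2 * (Real.sqrt (mu3 N ℓ / N) + (ℓ : ℝ) / N)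
      ≤ Real.sqrt 2 * (Real.sqrt (2 * Real.exp 1) * N ^ ((1 : ℝ) / 8) + 1) := by
    calc ∑ ℓ ∈ Finset.range i, Real.sqrt 2 * (Real.sqrt (mu3 N ℓ / N) + (ℓ : ℝ) / N)
        ≤ ∑ _ℓ ∈ Finset.range i, B := by
          refine Finset.sum_le_sum fun ℓ hℓ => key ℓ (le_trans ?_ hi)
          exact_mod_cast Nat.cast_le.mpr (Finset.mem_range.mp hℓ).le
      _ = (i : ℝ) * B := by rw [Finset.sum_const, Finset.card_range, nsmul_eq_mul]
      _ ≤ N ^ ((1 : ℝ) / 2) * B := mul_le_mul_of_nonneg_right hi hB0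
      _ = Real.sqrt 2 * (Real.sqrt (2 * Real.exp 1)
            * (N ^ ((1 : ℝ) / 2) * N ^ (-(3 : ℝ) / 8))
            + N ^ ((1 : ℝ) / 2) * N ^ (-(1 : ℝ) / 2)) := by rw [hB]; ring
      _ = Real.sqrt 2 * (Real.sqrt (2 * Real.exp 1) * N ^ ((1 : ℝ) / 8) + 1) := by
          rw [e1, e2]
  have hs2 : Real.sqrt 2 < 1.5 := by
    rw [show (1.5 : ℝ) = Real.sqrt (1.5 ^ 2) by rw [Real.sqrt_sq]; norm_num]
    exact Real.sqrt_lt_sqrt (by norm_num) (by norm_num)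
  have hs : Real.sqrt (2 * Real.exp 1) < 2.4 := by
    rw [show (2.4 : ℝ) = Real.sqrt (2.4 ^ 2) by rw [Real.sqrt_sq]; norm_num]
    exact Real.sqrt_lt_sqrt (by positivity) (by nlinarith [Real.exp_one_lt_d9])
  have hss : Real.sqrt 2 * Real.sqrt (2 * Real.exp 1) < 3.6 := by
    nlinarith [Real.sqrt_nonneg 2, Real.sqrt_nonneg (2 * Real.exp 1)]
  calc ∑ ℓ ∈ Finset.range i, Real.sqrt 2 * (Real.sqrt (mu3 N ℓ / N) + (ℓ : ℝ) / N)
      ≤ Real.sqrt 2 * (Real.sqrt (2 * Real.exp 1) * N ^ ((1 : ℝ) / 8) + 1) := hsum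
    _ < 2 * Real.exp 1 * N ^ ((1 : ℝ) / 8) := by
        nlinarith [Real.exp_one_gt_d9, mul_le_mul_of_nonneg_right hss.le ht0.le,
          Real.sqrt_nonneg 2, Real.sqrt_nonneg (2 * Real.exp 1)]
end

section
/- Let Y be a finite type with |Y| = N, let k be a natural number, and let S be a finite subset of Y with |S| = m ≤ k. Then the number of functions f : Fin k → Y such that every element of S lies in the image of f is at most (k choose m) · m! · N^{k − m}. -/
/-- Counting bound: the number of functions `f : Fin k → Y` whose image contains a
given set `S` of size `m ≤ k` is at most `(k choose m) · m! · N^{k-m}`, where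
`N = |Y|`. -/
theorem stmt_10 {Y : Type*} [Fintype Y] [DecidableEq Y] (N k m : ℕ)
    (hN : Fintype.card Y = N) (S : Finset Y) (hS : S.card = m) (hm : m ≤ k) :
    Fintype.card {f : Fin k → Y // ∀ y ∈ S, ∃ x, f x = y}
      ≤ Nat.choose k m * Nat.factorial m * N ^ (k - m) := by
  classical
  -- injection into sigma type
  let T := Σ g : S ↪ Fin k, ({x : Fin k // x ∉ Set.range g} → Y)
  have hinj : Fintype.card {f : Fin k → Y // ∀ y ∈ S, ∃ x, f x = y}
      ≤ Fintype.card T := by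
    have : ∀ f : {f : Fin k → Y // ∀ y ∈ S, ∃ x, f x = y}, ∃ g : S → Fin k,
        ∀ y : S, f.1 (g y) = y := by
      intro f
      choose g hg using fun y : S => f.2 y y.2
      exact ⟨g, hg⟩
    choose g hg using this
    have ginj : ∀ f, Function.Injective (g f) := by
      intro f y1 y2 h
      have e1 := hg f y1
      have e2 := hg f y2
      rw [h] at e1
      exact Subtype.ext (e1.symm.trans e2)
    apply Fintype.card_le_of_injective
      (fun f => (⟨⟨g f, ginj f⟩, fun x => f.1 x.1⟩ : T))
    intro f1 f2 h
    have h1 : (⟨g f1, ginj f1⟩ : S ↪ Fin k) = ⟨g f2, ginj f2⟩ :=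
      congrArg Sigma.fst h
    have h1' : g f1 = g f2 := congrArg (fun e => e.toFun) h1
    have h2 : HEq (fun x : {x : Fin k // x ∉ Set.range (⟨g f1, ginj f1⟩ : S ↪ Fin k)} => f1.1 x.1)
        (fun x : {x : Fin k // x ∉ Set.range (⟨g f2, ginj f2⟩ : S ↪ Fin k)} => f2.1 x.1) := by
      exact (Sigma.mk.inj_iff.mp h).2
    apply Subtype.ext
    funext x
    by_cases hx : x ∈ Set.range (g f1)
    · obtain ⟨y, hy⟩ := hx
      have e1 := hg f1 y
      have e2 := hg f2 y
      rw [hy] at e1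
      rw [h1'] at hy
      rw [hy] at e2
      rw [e1, e2]
    · rw [h1] at h2
      have h2' := eq_of_heq h2
      have hx2 : x ∉ Set.range ((⟨g f2, ginj f2⟩ : S ↪ Fin k) : S → Fin k) := by
        simpa [← h1'] using hx
      exact congrFun h2' ⟨x, hx2⟩
  refine hinj.trans ?_
  have hcardfib : ∀ g : S ↪ Fin k,
      Fintype.card ({x : Fin k // x ∉ Set.range g} → Y) = N ^ (k - m) := by
    intro g
    rw [Fintype.card_fun, hN]
    congr 1
    have : Fintype.card {x : Fin k // x ∈ Set.range g} = m := by
      have h := Set.card_range_of_injective g.injective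
      rw [Fintype.card_coe, hS] at h
      exact (Fintype.card_congr (Equiv.refl _)).trans h
    rw [Fintype.card_subtype_compl, this, Fintype.card_fin]
  have : Fintype.card T = Fintype.card (S ↪ Fin k) * N ^ (k - m) := by
    rw [Fintype.card_sigma]
    simp only [hcardfib]
    rw [Finset.sum_const, Finset.card_univ, smul_eq_mul]
  rw [this, Fintype.card_embedding_eq, Fintype.card_coe, hS, Fintype.card_fin]
  rw [Nat.descFactorial_eq_factorial_mul_choose]
  ring_nf
  exact le_refl _
end
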